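/- For vectors w_k in ℂ^B defined by w_k[b] = exp(2πi k s_b / N), b = 1,...,B, where s_1,...,s_B are chosen independently and uniformly at random from {0,...,N-1}, with probability at least 1 - 1/5 over the choice of shifts, for all distinct k, k' ∈ {0,...,N-1}: |w_k^† w_{k'}| / B ≤ 2√(log(5N)/B). -/

import Mathlib

/-!
Write `ψ = ZMod.stdAddChar` for the standard character of `ZMod N`. Then
`conj (w_k b) * w_k' b = ψ ((k' - k) * s_b)`, so every inner product between distinct columns is
a sum `∑_b ψ (m * s_b)` of `B` independent unit complex numbers for one of the `N - 1` nonzero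
frequencies `m`, and each summand has mean zero because a nontrivial character sums to zero.
Every `z : ℂ` lies within angle `π / 12` of one of the twelve directions `ψ d`, `d : ZMod 12`,
so `‖z‖ cos (π / 12)` is bounded by one of twelve real parts; real Hoeffding applies to each.
With threshold `T = 2 √(B log (5N))` and `cos (π / 12) ^ 2 ≥ 9 / 10` every event has probability
at most `(5N) ^ (-9/5)`, and `12 (N - 1) (5N) ^ (-9/5) ≤ 1 / 5`.
-/

open MeasureTheory ProbabilityTheory Real Complex Finset

lemma ZMod.sum_eq_sum_range {M : Type*} [AddCommMonoid M] (N : ℕ) [NeZero N] (f : ZMod N → M) :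
    ∑ a, f a = ∑ v ∈ range N, f v :=
  sum_nbij' ZMod.val (↑) (fun a _ ↦ mem_range.2 (ZMod.val_lt a)) (fun _ _ ↦ mem_univ _)
    (fun a _ ↦ ZMod.natCast_zmod_val a) (fun _ hv ↦ ZMod.val_cast_of_lt (mem_range.1 hv))
    (fun a _ ↦ by rw [ZMod.natCast_zmod_val])

lemma ZMod.conj_exp_mul_exp_eq_stdAddChar (N : ℕ) [NeZero N] (k k' v : ℕ) :
    (starRingEnd ℂ) (Complex.exp (2 * π * Complex.I * k * v / N)) *
        Complex.exp (2 * π * Complex.I * k' * v / N) =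
      ZMod.stdAddChar (((k' : ZMod N) - (k : ZMod N)) * (v : ZMod N)) := by
  have h (j : ℕ) : Complex.exp (2 * π * Complex.I * j * v / N) =
      ZMod.stdAddChar ((j : ZMod N) * (v : ZMod N)) := by
    rw [← Nat.cast_mul, ZMod.stdAddChar_apply, ZMod.toCircle_natCast]
    push_cast
    ring_nf
  rw [h, h, AddChar.starComp_apply (by rw [ZMod.ringChar_zmod_n]; exact NeZero.pos N),
    AddChar.inv_apply, ← AddChar.map_add_eq_mul]
  congr 1
  ring

lemma ZMod.sum_stdAddChar_mul_eq_zero {N : ℕ} [NeZero N] {m : ZMod N} (hm : m ≠ 0) :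
    ∑ a, ZMod.stdAddChar (m * a) = 0 :=
  AddChar.sum_eq_zero_of_ne_one (ZMod.isPrimitive_stdAddChar N hm)

lemma ZMod.norm_stdAddChar {N : ℕ} [NeZero N] (a : ZMod N) : ‖ZMod.stdAddChar a‖ = 1 :=
  Circle.norm_coe _

lemma ZMod.exists_norm_mul_cos_le_re_conj_stdAddChar_mul {n : ℕ} [NeZero n] (z : ℂ) :
    ∃ d : ZMod n, ‖z‖ * Real.cos (π / n) ≤ ((starRingEnd ℂ) (ZMod.stdAddChar d) * z).re := by
  have hn : (0 : ℝ) < n := by exact_mod_cast NeZero.pos n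
  set r : ℤ := round (z.arg * n / (2 * π))
  have hclose : |z.arg - 2 * π * r / n| ≤ π / n := by
    have h := abs_sub_round (z.arg * n / (2 * π))
    have : z.arg - 2 * π * r / n = (z.arg * n / (2 * π) - r) * (2 * π / n) := by
      field_simp
    rw [this, abs_mul, abs_of_pos (show 0 < 2 * π / n by positivity)]
    calc _ ≤ 1 / 2 * (2 * π / n) := by gcongr
      _ = π / n := by ring
  have hre : ((starRingEnd ℂ) (ZMod.stdAddChar (r : ZMod n)) * z).re =
      ‖z‖ * Real.cos (z.arg - 2 * π * r / n) := by
    rw [ZMod.stdAddChar_coe, ← Complex.exp_conj]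
    conv_lhs => rw [← Complex.norm_mul_exp_arg_mul_I z]
    rw [mul_left_comm, ← Complex.exp_add, Complex.re_ofReal_mul, ← Complex.exp_ofReal_mul_I_re]
    congr 3
    simp only [map_div₀, map_mul, Complex.conj_ofReal, Complex.conj_I, map_intCast, map_natCast,
      map_ofNat]
    push_cast
    ring
  refine ⟨r, ?_⟩
  rw [hre, ← Real.cos_abs (z.arg - _)]
  gcongr
  exact Real.cos_le_cos_of_nonneg_of_le_pi (abs_nonneg _)
    (div_le_self pi_pos.le (by exact_mod_cast NeZero.one_le)) hclose

lemma Real.nine_div_ten_le_cos_pi_div_twelve_sq : 9 / 10 ≤ Real.cos (π / 12) ^ 2 := by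
  have h : Real.cos (π / 12) ^ 2 = 1 / 2 + Real.cos (π / 6) / 2 := by
    rw [Real.cos_sq, show 2 * (π / 12) = π / 6 by ring]
  rw [h, Real.cos_pi_div_six]
  nlinarith [Real.sq_sqrt (show (0 : ℝ) ≤ 3 by norm_num), Real.sqrt_nonneg 3]

section

variable {Ω : Type*} [MeasurableSpace Ω] {μ : Measure Ω}

lemma integral_comp_eq_inv_smul_sum_range [IsFiniteMeasure μ] {E : Type*}
    [NormedAddCommGroup E] [NormedSpace ℝ E] [CompleteSpace E] {N : ℕ} {X : Ω → ℕ}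
    (hX : Measurable X) (hlt : ∀ ω, X ω < N)
    (hunif : ∀ v < N, μ {ω | X ω = v} = (N : ENNReal)⁻¹) (g : ℕ → E) :
    ∫ ω, g (X ω) ∂μ = (N : ℝ)⁻¹ • ∑ v ∈ range N, g v := by
  have hsplit : (fun ω ↦ g (X ω)) =
      fun ω ↦ ∑ v ∈ range N, {ω | X ω = v}.indicator (fun _ ↦ g v) ω := by
    ext ω
    simp [Set.indicator_apply, hlt ω]
  have hfiber (v : ℕ) : MeasurableSet {ω | X ω = v} := hX (measurableSet_singleton v)
  rw [hsplit, integral_finsetSum _ fun v _ ↦ (integrable_const (g v)).indicator (hfiber v),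
    smul_sum]
  refine sum_congr rfl fun v hv ↦ ?_
  rw [integral_indicator_const _ (hfiber v), measureReal_def, hunif v (mem_range.1 hv),
    ENNReal.toReal_inv, ENNReal.toReal_natCast]

variable [IsProbabilityMeasure μ]

lemma hasSubgaussianMGF_re_mul {Z : Ω → ℂ} (hZ : Measurable Z) (hbdd : ∀ ω, ‖Z ω‖ ≤ 1)
    (hmean : μ[Z] = 0) {u : ℂ} (hu : ‖u‖ ≤ 1) :
    HasSubgaussianMGF (fun ω ↦ (u * Z ω).re) 1 μ := by
  have hmem : ∀ᵐ ω ∂μ, (u * Z ω).re ∈ Set.Icc (-1) 1 := by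
    refine ae_of_all _ fun ω ↦ abs_le.1 ((abs_re_le_norm _).trans ?_)
    rw [norm_mul]
    exact mul_le_one₀ hu (norm_nonneg _) (hbdd ω)
  have hZint : Integrable Z μ := Integrable.of_bound hZ.aestronglyMeasurable 1 (ae_of_all _ hbdd)
  have hmean_re : ∫ ω, (u * Z ω).re ∂μ = 0 :=
    calc ∫ ω, (u * Z ω).re ∂μ = (∫ ω, u * Z ω ∂μ).re := integral_re (hZint.const_mul u)
      _ = 0 := by rw [integral_const_mul, hmean, mul_zero, zero_re]
  have h := hasSubgaussianMGF_of_mem_Icc_of_integral_eq_zero (by fun_prop) hmem hmean_re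
  norm_num at h
  exact h

lemma measureReal_norm_sum_ge_le_of_iIndepFun {ι : Type*} {Z : ι → Ω → ℂ}
    (hindep : iIndepFun Z μ) (hmeas : ∀ i, Measurable (Z i)) (hbdd : ∀ i ω, ‖Z i ω‖ ≤ 1)
    (hmean : ∀ i, μ[Z i] = 0) (s : Finset ι) {n : ℕ} (hn : 2 ≤ n) {T : ℝ} (hT : 0 ≤ T) :
    μ.real {ω | T ≤ ‖∑ i ∈ s, Z i ω‖} ≤
      n * Real.exp (-(T * Real.cos (π / n)) ^ 2 / (2 * #s)) := by
  have : NeZero n := ⟨by omega⟩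
  have hcos : 0 ≤ Real.cos (π / n) := Real.cos_nonneg_of_mem_Icc
    ⟨by linarith [pi_pos, div_nonneg pi_pos.le (Nat.cast_nonneg n)],
      div_le_div_of_nonneg_left pi_pos.le two_pos (by exact_mod_cast hn)⟩
  let X (d : ZMod n) (i : ι) (ω : Ω) : ℝ := ((starRingEnd ℂ) (ZMod.stdAddChar d) * Z i ω).re
  have hX (d : ZMod n) : μ.real {ω | T * Real.cos (π / n) ≤ ∑ i ∈ s, X d i ω} ≤
      Real.exp (-(T * Real.cos (π / n)) ^ 2 / (2 * #s)) := by
    have hnorm : ‖(starRingEnd ℂ) (ZMod.stdAddChar d)‖ ≤ 1 := by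
      rw [RCLike.norm_conj, ZMod.norm_stdAddChar]
    simpa [X] using HasSubgaussianMGF.measure_sum_ge_le_of_iIndepFun
      (hindep.comp (fun _ z ↦ ((starRingEnd ℂ) (ZMod.stdAddChar d) * z).re) fun _ ↦ by fun_prop)
      (fun i _ ↦ hasSubgaussianMGF_re_mul (hmeas i) (hbdd i) (hmean i) hnorm)
      (ε := T * Real.cos (π / n)) (by positivity)
  have hcover : {ω | T ≤ ‖∑ i ∈ s, Z i ω‖} ⊆
      ⋃ d, {ω | T * Real.cos (π / n) ≤ ∑ i ∈ s, X d i ω} := by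
    intro ω hω
    obtain ⟨d, hd⟩ := ZMod.exists_norm_mul_cos_le_re_conj_stdAddChar_mul (n := n) (∑ i ∈ s, Z i ω)
    refine Set.mem_iUnion.2 ⟨d, ?_⟩
    calc T * Real.cos (π / n) ≤ ‖∑ i ∈ s, Z i ω‖ * Real.cos (π / n) := by gcongr; exact hω
      _ ≤ _ := hd
      _ = ∑ i ∈ s, X d i ω := by simp only [X, mul_sum, re_sum]
  calc μ.real {ω | T ≤ ‖∑ i ∈ s, Z i ω‖}
      ≤ ∑ d, μ.real {ω | T * Real.cos (π / n) ≤ ∑ i ∈ s, X d i ω} :=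
        (measureReal_mono hcover).trans (measureReal_iUnion_fintype_le _)
    _ ≤ ∑ _d : ZMod n, Real.exp (-(T * Real.cos (π / n)) ^ 2 / (2 * #s)) :=
        sum_le_sum fun d _ ↦ hX d
    _ = _ := by simp

lemma measureReal_norm_sum_stdAddChar_ge_le {ι : Type*} {N : ℕ} [NeZero N] {s : ι → Ω → ℕ}
    (hmeas : ∀ b, Measurable (s b)) (hrange : ∀ b ω, s b ω < N)
    (hunif : ∀ b, ∀ v < N, μ {ω | s b ω = v} = (N : ENNReal)⁻¹) (hindep : iIndepFun s μ)
    {m : ZMod N} (hm : m ≠ 0) (t : Finset ι) {n : ℕ} (hn : 2 ≤ n) {T : ℝ} (hT : 0 ≤ T) :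
    μ.real {ω | T ≤ ‖∑ b ∈ t, ZMod.stdAddChar (m * (s b ω : ZMod N))‖} ≤
      n * Real.exp (-(T * Real.cos (π / n)) ^ 2 / (2 * #t)) :=
  measureReal_norm_sum_ge_le_of_iIndepFun
    (hindep.comp (fun _ v ↦ ZMod.stdAddChar (m * (v : ZMod N))) fun _ ↦ measurable_from_top)
    (fun b ↦ measurable_from_top.comp (hmeas b)) (fun _ _ ↦ (ZMod.norm_stdAddChar _).le)
    (fun b ↦ (integral_comp_eq_inv_smul_sum_range (hmeas b) (hrange b) (hunif b)
      fun v ↦ ZMod.stdAddChar (m * (v : ZMod N))).trans <| by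
      rw [← ZMod.sum_eq_sum_range N fun a ↦ ZMod.stdAddChar (m * a),
        ZMod.sum_stdAddChar_mul_eq_zero hm, smul_zero])
    t hn hT

end

lemma natCast_pred_mul_exp_neg_log_le (N : ℕ) :
    ((N - 1 : ℕ) : ℝ) * (12 * Real.exp (-(9 / 5) * Real.log (5 * N))) ≤ 1 / 5 := by
  rcases Nat.eq_zero_or_pos N with rfl | hN
  · norm_num
  have hnat : (60 * (N - 1)) ^ 5 ≤ (5 * N) ^ 9 := by
    rcases Nat.lt_or_ge N 5 with h5 | h5
    · interval_cases N <;> norm_num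
    · calc (60 * (N - 1)) ^ 5 ≤ 60 ^ 5 * N ^ 5 := by rw [← mul_pow]; gcongr; omega
        _ ≤ 5 ^ 9 * 5 ^ 4 * N ^ 5 := by gcongr; norm_num
        _ ≤ 5 ^ 9 * N ^ 4 * N ^ 5 := by gcongr
        _ = (5 * N) ^ 9 := by ring
  have hreal : 60 * ((N - 1 : ℕ) : ℝ) ≤ Real.exp (9 / 5 * Real.log (5 * N)) := by
    rw [← pow_le_pow_iff_left₀ (by positivity) (Real.exp_pos _).le (by norm_num : 5 ≠ 0),
      ← Real.exp_nat_mul, show ((5 : ℕ) : ℝ) * (9 / 5 * Real.log (5 * N)) =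
        ((9 : ℕ) : ℝ) * Real.log (5 * N) by push_cast; ring,
      Real.exp_nat_mul, Real.exp_log (by positivity)]
    exact_mod_cast hnat
  rw [neg_mul, Real.exp_neg, ← mul_assoc, ← div_eq_mul_inv, div_le_iff₀ (Real.exp_pos _)]
  linarith

lemma exp_neg_sq_mul_cos_pi_div_twelve_le {B L : ℝ} (hB : 0 < B) (hL : 0 ≤ L) :
    Real.exp (-(B * (2 * √(L / B)) * Real.cos (π / 12)) ^ 2 / (2 * B)) ≤
      Real.exp (-(9 / 5) * L) := by
  have hexponent : (B * (2 * √(L / B)) * Real.cos (π / 12)) ^ 2 / (2 * B) =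
      2 * L * Real.cos (π / 12) ^ 2 := by
    rw [mul_pow, mul_pow, mul_pow, Real.sq_sqrt (by positivity)]
    field_simp
  rw [Real.exp_le_exp, neg_div, hexponent]
  nlinarith [mul_le_mul_of_nonneg_left Real.nine_div_ten_le_cos_pi_div_twelve_sq hL]

lemma exists_sum_conj_exp_mul_exp_eq_sum_stdAddChar {ι : Type*} (t : Finset ι) (v : ι → ℕ)
    {N k k' : ℕ} [NeZero N] (hk : k < N) (hk' : k' < N) (hne : k ≠ k') :
    ∃ m : ZMod N, m ≠ 0 ∧
      ∑ b ∈ t, (starRingEnd ℂ) (Complex.exp (2 * π * Complex.I * k * v b / N)) *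
          Complex.exp (2 * π * Complex.I * k' * v b / N) =
        ∑ b ∈ t, ZMod.stdAddChar (m * (v b : ZMod N)) := by
  refine ⟨(k' : ZMod N) - (k : ZMod N), sub_ne_zero.2 fun h ↦ hne ?_,
    sum_congr rfl fun b _ ↦ ZMod.conj_exp_mul_exp_eq_stdAddChar N k k' (v b)⟩
  simpa [ZMod.val_cast_of_lt hk, ZMod.val_cast_of_lt hk'] using congrArg ZMod.val h.symm

/-- Mutual incoherence bound for the randomly sub-sampled IDFT sensing matrix:
with probability at least `1 - 1/5` over uniformly random shifts
`s 1, …, s B ∈ {0, …, N-1}`, all normalized inner products between distinct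
columns `w k` (with `w k b = exp (2πi k s_b / N)`) are at most
`2 √(log (5N) / B)`. -/
theorem mutual_incoherence_bound
    {Ω : Type*} [MeasurableSpace Ω] (μ : Measure Ω) [IsProbabilityMeasure μ]
    (N B : ℕ) (hN : 0 < N) (hB : 0 < B)
    (s : Fin B → Ω → ℕ)
    (hmeas : ∀ b, Measurable (s b))
    (hrange : ∀ b ω, s b ω < N)
    (hunif : ∀ b, ∀ v, v < N → μ {ω | s b ω = v} = (N : ENNReal)⁻¹)
    (hindep : iIndepFun s μ) :
    1 - 1/5 ≤
      μ {ω | ∀ k k' : ℕ, k < N → k' < N → k ≠ k' →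
        ‖∑ b : Fin B,
            (starRingEnd ℂ) (Complex.exp (2 * Real.pi * Complex.I * k * (s b ω) / N)) *
              Complex.exp (2 * Real.pi * Complex.I * k' * (s b ω) / N)‖ / (B : ℝ) ≤
          2 * Real.sqrt (Real.log (5 * N) / B)} := by
  have : NeZero N := ⟨hN.ne'⟩
  have hBpos : (0 : ℝ) < B := by exact_mod_cast hB
  let bad (m : ZMod N) : Set Ω :=
    {ω | B * (2 * √(Real.log (5 * N) / B)) ≤ ‖∑ b, ZMod.stdAddChar (m * (s b ω : ZMod N))‖}
  set U := ⋃ m ∈ univ.erase 0, bad m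
  have hbad : μ.real U ≤ 1 / 5 := by
    refine (measureReal_biUnion_finset_le _ _).trans <| (sum_le_card_nsmul _ _
      (12 * Real.exp (-(9 / 5) * Real.log (5 * N))) fun m hm ↦ ?_).trans ?_
    · refine (measureReal_norm_sum_stdAddChar_ge_le hmeas hrange hunif hindep
        (ne_of_mem_erase hm) univ (n := 12) (by norm_num) (by positivity)).trans ?_
      simpa using exp_neg_sq_mul_cos_pi_div_twelve_le hBpos (Real.log_nonneg (by norm_cast; omega))
    · simpa [card_erase_of_mem] using natCast_pred_mul_exp_neg_log_le N
  have hU : μ U ≤ 1 / 5 := by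
    rw [← ofReal_measureReal (measure_ne_top _ _)]
    exact (ENNReal.ofReal_le_ofReal hbad).trans_eq (by norm_num [ENNReal.ofReal_div_of_pos])
  have hcompl : 1 - μ U ≤ μ Uᶜ := by
    rw [tsub_le_iff_right, add_comm, ← measure_univ (μ := μ)]
    exact measure_univ_le_add_compl U
  refine (tsub_le_tsub_left hU 1).trans (hcompl.trans (measure_mono ?_))
  intro ω hω k k' hk hk' hne
  obtain ⟨m, hm, hsum⟩ := exists_sum_conj_exp_mul_exp_eq_sum_stdAddChar univ (s · ω) hk hk' hne
  rw [hsum, div_le_iff₀ hBpos, mul_comm]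
  by_contra hlt
  exact hω (Set.mem_biUnion (mem_erase.2 ⟨hm, mem_univ _⟩) (le_of_not_ge hlt))
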